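/- Let A = {A_a}_{a∈Ω_A} and B = {B_b}_{b∈Ω_B} be POVMs on a Hilbert space H. For any POVM F = {F_x}_{x∈Ω} and functions f_A: Ω → Ω_A, f_B: Ω → Ω_B, with α := max_a ‖f_A(F)_a - A_a‖, β := max_b ‖f_B(F)_b - B_b‖, V(A) := max_a ‖A_a - A_a²‖, V(B) := max_b ‖B_b - B_b²‖, the following holds: 2αβ + α + β + 2(2α + V(A))^{1/2}(2β + V(B))^{1/2} ≥ max_{a,b} ‖[A_a, B_b]‖. -/

import Mathlib

/-!
Write `a' = f_A(F)_a` and `b' = f_B(F)_b`. An effect `e` (`0 ≤ e ≤ 1`) satisfies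
`‖e - 1/2‖ ≤ 1/2`, hence `‖[e, w]‖ ≤ ‖w‖`; expanding `a = a' - (a' - a)` and `b = b' - (b' - b)`
therefore bounds `‖[a, b]‖` by `2αβ + α + β + ‖[a', b']‖`.

Two coarse-grainings of one POVM almost commute when they are almost sharp. With the indicator
weights `p, q` of the two fibres, `a' b' - ∑ₓ pₓ qₓ Fₓ = ∑ₓ (a' - pₓ) Fₓ (qₓ - b')`, and the
Cauchy–Schwarz inequality of the Hilbert C⋆-module `A^Ω` (with `Fₓ = √Fₓ √Fₓ`) bounds it by
`√‖a' - a'²‖ √‖b' - b'²‖`, because `∑ₓ (a' - pₓ) Fₓ (a' - pₓ) = a' - a'²`. As `∑ₓ pₓ qₓ Fₓ` is self-adjoint, `‖[a', b']‖`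
is at most twice that. Finally `‖a' - a'²‖ ≤ 2‖a' - a‖ + ‖a - a²‖`.
-/

open Finset

theorem Finset.sum_sub_smul_mul_mul_sub_smul {R A Ω : Type*} [CommRing R] [Ring A] [Algebra R A]
    [Fintype Ω] (F : Ω → A) (hF : ∑ x, F x = 1) (U V : A) (u v : Ω → R) :
    ∑ x, (U - u x • 1) * F x * (V - v x • 1) =
      U * V - U * ∑ x, v x • F x - (∑ x, u x • F x) * V + ∑ x, (u x * v x) • F x := by
  have expand : ∀ x, (U - u x • 1) * F x * (V - v x • 1) =
      U * F x * V - U * (v x • F x) - u x • F x * V + (u x * v x) • F x := fun x => by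
    simp only [sub_mul, mul_sub, smul_mul_assoc, mul_smul_comm, one_mul, mul_one, smul_smul,
      smul_sub, mul_comm (v x)]
    abel
  simp only [expand, sum_add_distrib, sum_sub_distrib, ← mul_sum, ← sum_mul, hF, mul_one]

theorem le_of_eq_ciSup_of_finite {ι α : Type*} [Finite ι] [ConditionallyCompleteLattice α]
    {f : ι → α} {c : α} (h : c = ⨆ i, f i) (i : ι) : f i ≤ c :=
  h ▸ le_ciSup (Set.finite_range f).bddAbove i

section

variable {A : Type*} [CStarAlgebra A] [PartialOrder A] [StarOrderedRing A]

theorem IsSelfAdjoint.norm_le_of_neg_le_of_le {b : A} (hb : IsSelfAdjoint b) {r : ℝ}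
    (hr : 0 ≤ r) (h₁ : -algebraMap ℝ A r ≤ b) (h₂ : b ≤ algebraMap ℝ A r) : ‖b‖ ≤ r := by
  obtain (_ | _) := subsingleton_or_nontrivial A
  · simp [Subsingleton.elim b 0, hr]
  rcases CStarAlgebra.norm_or_neg_norm_mem_spectrum hb with h | h
  · exact (le_algebraMap_iff_spectrum_le hb).1 h₂ _ h
  · rw [← map_neg] at h₁
    linarith [(algebraMap_le_iff_le_spectrum hb).1 h₁ _ h]

namespace CStarAlgebra

open WithCStarModule in
theorem norm_sum_star_mul_le {ι : Type*} [Fintype ι] (a b : ι → A) :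
    ‖∑ i, star (a i) * b i‖ ≤ √‖∑ i, star (a i) * a i‖ * √‖∑ i, star (b i) * b i‖ := by
  rw [mul_comm]
  simpa [pi_inner, pi_norm, inner_def] using CStarModule.norm_inner_le (A := A)
    (x := (equiv A (ι → A)).symm fun i => star (b i))
    (y := (equiv A (ι → A)).symm fun i => star (a i))

theorem norm_sub_half_le {a : A} (h₀ : 0 ≤ a) (h₁ : a ≤ 1) :
    ‖a - algebraMap ℝ A (1 / 2)‖ ≤ 1 / 2 := by
  refine ((IsSelfAdjoint.of_nonneg h₀).sub (.algebraMap A (.all _))).norm_le_of_neg_le_of_le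
    (by norm_num) (by simpa using h₀) ?_
  rw [sub_le_iff_le_add, ← map_add]
  norm_num [h₁]

theorem norm_commutator_le {a : A} (h₀ : 0 ≤ a) (h₁ : a ≤ 1) (w : A) :
    ‖a * w - w * a‖ ≤ ‖w‖ := by
  set c := algebraMap ℝ A (1 / 2)
  have hc : a * w - w * a = (a - c) * w - w * (a - c) := by
    rw [sub_mul, mul_sub, Algebra.commutes]; abel
  calc ‖a * w - w * a‖ ≤ ‖a - c‖ * ‖w‖ + ‖w‖ * ‖a - c‖ :=
        hc ▸ norm_sub_le_of_le (norm_mul_le _ _) (norm_mul_le _ _)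
    _ ≤ 1 / 2 * ‖w‖ + ‖w‖ * (1 / 2) := by gcongr <;> exact norm_sub_half_le h₀ h₁
    _ = ‖w‖ := by ring

theorem norm_sub_sq_le {a a' : A} (ha₀ : 0 ≤ a) (ha₁ : a ≤ 1) (ha'₀ : 0 ≤ a')
    (ha'₁ : a' ≤ 1) : ‖a' - a' ^ 2‖ ≤ 2 * ‖a' - a‖ + ‖a - a ^ 2‖ := by
  have h : a' - a' ^ 2 = (a - a ^ 2) + (a' - a) * (1 - a) - a' * (a' - a) := by noncomm_ring
  have h₁ : ‖1 - a‖ ≤ 1 := (norm_le_one_iff_of_nonneg _ (sub_nonneg.2 ha₁)).2 (sub_le_self _ ha₀)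
  have h₂ : ‖a'‖ ≤ 1 := (norm_le_one_iff_of_nonneg _ ha'₀).2 ha'₁
  calc ‖a' - a' ^ 2‖ ≤ ‖a - a ^ 2‖ + ‖a' - a‖ * ‖1 - a‖ + ‖a'‖ * ‖a' - a‖ :=
        h ▸ norm_sub_le_of_le (norm_add_le_of_le le_rfl (norm_mul_le _ _)) (norm_mul_le _ _)
    _ ≤ ‖a - a ^ 2‖ + ‖a' - a‖ * 1 + 1 * ‖a' - a‖ := by gcongr
    _ = 2 * ‖a' - a‖ + ‖a - a ^ 2‖ := by ring

theorem norm_commutator_le_of_approx {a b : A} (ha₀ : 0 ≤ a) (ha₁ : a ≤ 1)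
    (hb₀ : 0 ≤ b) (hb₁ : b ≤ 1) (a' b' : A) :
    ‖a * b - b * a‖ ≤
      2 * ‖a' - a‖ * ‖b' - b‖ + ‖a' - a‖ + ‖b' - b‖ + ‖a' * b' - b' * a'‖ := by
  set x := a' - a
  set y := b' - b
  have h : a * b - b * a =
      (a' * b' - b' * a') - (a * y - y * a) + (b * x - x * b) - (x * y - y * x) := by
    simp only [x, y]; noncomm_ring
  have hxy : ‖x * y - y * x‖ ≤ 2 * ‖x‖ * ‖y‖ := by
    linarith [norm_sub_le_of_le (norm_mul_le x y) (norm_mul_le y x)]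
  have hsplit : ‖a * b - b * a‖ ≤
      ‖a' * b' - b' * a'‖ + ‖a * y - y * a‖ + ‖b * x - x * b‖ + ‖x * y - y * x‖ :=
    h ▸ norm_sub_le_of_le (norm_add_le_of_le (norm_sub_le _ _) le_rfl) le_rfl
  linarith [norm_commutator_le ha₀ ha₁ y, norm_commutator_le hb₀ hb₁ x]

section POVM

variable {Ω : Type*} [Fintype Ω] {F : Ω → A}

theorem isSelfAdjoint_sum_smul (hF₀ : ∀ x, 0 ≤ F x) (p : Ω → ℝ) :
    IsSelfAdjoint (∑ x, p x • F x) :=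
  isSelfAdjoint_sum _ fun x _ => (IsSelfAdjoint.all (p x)).smul (.of_nonneg (hF₀ x))

theorem norm_mul_sub_sum_smul_le (hF₀ : ∀ x, 0 ≤ F x) (hF : ∑ x, F x = 1) (p q : Ω → ℝ) :
    ‖(∑ x, p x • F x) * (∑ x, q x • F x) - ∑ x, (p x * q x) • F x‖ ≤
      √‖∑ x, p x ^ 2 • F x - (∑ x, p x • F x) ^ 2‖ *
        √‖∑ x, q x ^ 2 • F x - (∑ x, q x • F x) ^ 2‖ := by
  set P := ∑ x, p x • F x
  set Q := ∑ x, q x • F x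
  let g x := CFC.sqrt (F x)
  have hg : ∀ x, star (g x) * g x = F x := fun x => by
    rw [(IsSelfAdjoint.of_nonneg (CFC.sqrt_nonneg (F x))).star_eq,
      CFC.sqrt_mul_sqrt_self _ (hF₀ x)]
  have hstar : ∀ {U : A}, IsSelfAdjoint U → ∀ (u : Ω → ℝ) (W : A) (x : Ω),
      star (g x * (U - u x • 1)) * (g x * W) = (U - u x • 1) * F x * W := fun hU u W x => by
    rw [star_mul, star_sub, star_smul, star_trivial (u x), star_one, hU.star_eq, ← hg x]
    noncomm_ring
  have hP : IsSelfAdjoint P := isSelfAdjoint_sum_smul hF₀ p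
  have hQ : IsSelfAdjoint Q := isSelfAdjoint_sum_smul hF₀ q
  let a x := g x * (P - p x • 1)
  let b x := g x * (Q - q x • 1)
  have hab : ∑ x, star (a x) * b x = ∑ x, (p x * q x) • F x - P * Q := by
    simp only [a, b, hstar hP, sum_sub_smul_mul_mul_sub_smul F hF]
    abel
  have haa : ∑ x, star (a x) * a x = ∑ x, p x ^ 2 • F x - P ^ 2 := by
    simp only [a, hstar hP, sum_sub_smul_mul_mul_sub_smul F hF, sq]
    abel
  have hbb : ∑ x, star (b x) * b x = ∑ x, q x ^ 2 • F x - Q ^ 2 := by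
    simp only [b, hstar hQ, sum_sub_smul_mul_mul_sub_smul F hF, sq]
    abel
  rw [norm_sub_rev, ← hab, ← haa, ← hbb]
  exact norm_sum_star_mul_le a b

theorem norm_commutator_sum_smul_le (hF₀ : ∀ x, 0 ≤ F x) (hF : ∑ x, F x = 1) (p q : Ω → ℝ) :
    ‖(∑ x, p x • F x) * (∑ x, q x • F x) - (∑ x, q x • F x) * (∑ x, p x • F x)‖ ≤
      2 * √‖∑ x, p x ^ 2 • F x - (∑ x, p x • F x) ^ 2‖ *
        √‖∑ x, q x ^ 2 • F x - (∑ x, q x • F x) ^ 2‖ := by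
  set P := ∑ x, p x • F x
  set Q := ∑ x, q x • F x
  set G := ∑ x, (p x * q x) • F x
  have hstar : star (P * Q - G) = Q * P - G := by
    rw [star_sub, star_mul, (isSelfAdjoint_sum_smul hF₀ p).star_eq,
      (isSelfAdjoint_sum_smul hF₀ q).star_eq, (isSelfAdjoint_sum_smul hF₀ _).star_eq]
  calc ‖P * Q - Q * P‖ = ‖(P * Q - G) - star (P * Q - G)‖ := by
        rw [hstar, sub_sub_sub_cancel_right]
    _ ≤ 2 * ‖P * Q - G‖ := by
        linarith [norm_sub_le (P * Q - G) (star (P * Q - G)), norm_star (P * Q - G)]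
    _ ≤ _ := by linarith [norm_mul_sub_sum_smul_le hF₀ hF p q]

theorem norm_commutator_sum_le (hF₀ : ∀ x, 0 ≤ F x) (hF : ∑ x, F x = 1) (s t : Finset Ω) :
    ‖(∑ x ∈ s, F x) * (∑ x ∈ t, F x) - (∑ x ∈ t, F x) * (∑ x ∈ s, F x)‖ ≤
      2 * √‖∑ x ∈ s, F x - (∑ x ∈ s, F x) ^ 2‖ * √‖∑ x ∈ t, F x - (∑ x ∈ t, F x) ^ 2‖ := by
  classical
  have hweight : ∀ (s : Finset Ω) (n : ℕ), n ≠ 0 →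
      ∑ x, (if x ∈ s then (1 : ℝ) else 0) ^ n • F x = ∑ x ∈ s, F x := fun s n hn => by
    simp [ite_pow, zero_pow hn, ite_smul, sum_ite_mem]
  simpa [hweight _ 1 one_ne_zero, hweight _ 2 two_ne_zero] using
    norm_commutator_sum_smul_le hF₀ hF (fun x => if x ∈ s then 1 else 0)
      (fun x => if x ∈ t then 1 else 0)

theorem norm_commutator_le_of_approx_by_povm {a b : A} (ha₀ : 0 ≤ a) (ha₁ : a ≤ 1)
    (hb₀ : 0 ≤ b) (hb₁ : b ≤ 1) (hF₀ : ∀ x, 0 ≤ F x) (hF : ∑ x, F x = 1) (s t : Finset Ω) :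
    ‖a * b - b * a‖ ≤
      2 * ‖∑ x ∈ s, F x - a‖ * ‖∑ x ∈ t, F x - b‖ + ‖∑ x ∈ s, F x - a‖ +
        ‖∑ x ∈ t, F x - b‖ + 2 * √(2 * ‖∑ x ∈ s, F x - a‖ + ‖a - a ^ 2‖) *
          √(2 * ‖∑ x ∈ t, F x - b‖ + ‖b - b ^ 2‖) := by
  have hle_one (u : Finset Ω) : ∑ x ∈ u, F x ≤ 1 := hF ▸ sum_le_univ_sum_of_nonneg hF₀
  have hnonneg (u : Finset Ω) : 0 ≤ ∑ x ∈ u, F x := sum_nonneg fun x _ => hF₀ x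
  grw [norm_commutator_le_of_approx ha₀ ha₁ hb₀ hb₁ (∑ x ∈ s, F x) (∑ x ∈ t, F x),
    norm_commutator_sum_le hF₀ hF, norm_sub_sq_le ha₀ ha₁ (hnonneg s) (hle_one s),
    norm_sub_sq_le hb₀ hb₁ (hnonneg t) (hle_one t)]

end POVM

end CStarAlgebra

end

theorem uncertainty_tradeoff_main_general {H : Type*} [NormedAddCommGroup H]
    [InnerProductSpace ℂ H] [CompleteSpace H]
    {ΩA ΩB Ω : Type*} [Fintype ΩA] [Fintype ΩB] [Fintype Ω]
    [DecidableEq ΩA] [DecidableEq ΩB]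
    (A : ΩA → (H →L[ℂ] H)) (B : ΩB → (H →L[ℂ] H))
    (hApos : ∀ a, (A a).IsPositive) (hAsum : ∑ a, A a = 1)
    (hBpos : ∀ b, (B b).IsPositive) (hBsum : ∑ b, B b = 1)
    (F : Ω → (H →L[ℂ] H)) (hFpos : ∀ x, (F x).IsPositive) (hFsum : ∑ x, F x = 1)
    (fA : Ω → ΩA) (fB : Ω → ΩB)
    (α β VA VB : ℝ)
    (hα : α = ⨆ a, ‖(∑ x ∈ Finset.univ.filter (fun x => fA x = a), F x) - A a‖)
    (hβ : β = ⨆ b, ‖(∑ x ∈ Finset.univ.filter (fun x => fB x = b), F x) - B b‖)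
    (hVA : VA = ⨆ a, ‖A a - (A a) ^ 2‖) (hVB : VB = ⨆ b, ‖B b - (B b) ^ 2‖) :
    2 * α * β + α + β +
        2 * Real.sqrt (2 * α + VA) * Real.sqrt (2 * β + VB) ≥
      ⨆ ab : ΩA × ΩB, ‖A ab.1 * B ab.2 - B ab.2 * A ab.1‖ := by
  have hA₀ a : 0 ≤ A a := (A a).nonneg_iff_isPositive.2 (hApos a)
  have hB₀ b : 0 ≤ B b := (B b).nonneg_iff_isPositive.2 (hBpos b)
  have hF₀ x : 0 ≤ F x := (F x).nonneg_iff_isPositive.2 (hFpos x)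
  have hA₁ a : A a ≤ 1 := hAsum ▸ single_le_sum (fun i _ => hA₀ i) (mem_univ a)
  have hB₁ b : B b ≤ 1 := hBsum ▸ single_le_sum (fun i _ => hB₀ i) (mem_univ b)
  have hα₀ : 0 ≤ α := hα ▸ Real.iSup_nonneg fun _ => norm_nonneg _
  have hβ₀ : 0 ≤ β := hβ ▸ Real.iSup_nonneg fun _ => norm_nonneg _
  refine Real.iSup_le (fun ⟨a, b⟩ => ?_) (by positivity)
  grw [CStarAlgebra.norm_commutator_le_of_approx_by_povm (hA₀ a) (hA₁ a) (hB₀ b) (hB₁ b)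
      hF₀ hFsum, le_of_eq_ciSup_of_finite hα a, le_of_eq_ciSup_of_finite hβ b,
    le_of_eq_ciSup_of_finite hVA a, le_of_eq_ciSup_of_finite hVB b]

/-- Main theorem: Heisenberg uncertainty tradeoff for simultaneous measurement
of two arbitrary POVMs. -/
theorem uncertainty_tradeoff_main {H : Type*} [NormedAddCommGroup H]
    [InnerProductSpace ℂ H] [CompleteSpace H]
    {ΩA ΩB Ω : Type*} [Fintype ΩA] [Fintype ΩB] [Fintype Ω]
    [Nonempty ΩA] [Nonempty ΩB] [DecidableEq ΩA] [DecidableEq ΩB]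
    (A : ΩA → (H →L[ℂ] H)) (B : ΩB → (H →L[ℂ] H))
    (hApos : ∀ a, (A a).IsPositive) (hAsum : ∑ a, A a = 1)
    (hBpos : ∀ b, (B b).IsPositive) (hBsum : ∑ b, B b = 1)
    (F : Ω → (H →L[ℂ] H)) (hFpos : ∀ x, (F x).IsPositive) (hFsum : ∑ x, F x = 1)
    (fA : Ω → ΩA) (fB : Ω → ΩB)
    (α β VA VB : ℝ)
    (hα : α = ⨆ a, ‖(∑ x ∈ Finset.univ.filter (fun x => fA x = a), F x) - A a‖)
    (hβ : β = ⨆ b, ‖(∑ x ∈ Finset.univ.filter (fun x => fB x = b), F x) - B b‖)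
    (hVA : VA = ⨆ a, ‖A a - (A a) ^ 2‖) (hVB : VB = ⨆ b, ‖B b - (B b) ^ 2‖) :
    2 * α * β + α + β +
        2 * Real.sqrt (2 * α + VA) * Real.sqrt (2 * β + VB) ≥
      ⨆ ab : ΩA × ΩB, ‖A ab.1 * B ab.2 - B ab.2 * A ab.1‖ :=
  uncertainty_tradeoff_main_general A B hApos hAsum hBpos hBsum F hFpos hFsum fA fB α β VA VB hα hβ
    hVA hVB
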